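/- Let n ≥ 1 and 0 < d < n, and let Γ ⊆ ℝ^n be a nonempty closed d-Ahlfors regular set with constant 𝒜, with measure σ = ℋ^d restricted to Γ. Let 0 < s ≤ 1 and d/(d+s) < p < 1, and set θ = s + d − d/p. Then there is a constant C, depending only on n, d, s, p, and 𝒜, such that for every finite family of blocks a_k in Δ(z_k, ϱ_k) (z_k ∈ Γ, ϱ_k > 0) and real coefficients λ_k, k ∈ F with F finite: ‖ ∑_{k∈F} λ_k a_k ‖_{Λ^{θ,1}(Γ)} ≤ C ( ∑_{k∈F} |λ_k|^p ϱ_k^{d − dp/2 − sp} )^{1/p}. (This is the quantitative form of the embedding of the atomic space Ȧ^{s,p}(Γ) into the Slobodeckij space Λ^{θ,1}(Γ).) -/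

import Mathlib

open MeasureTheory Metric Set ENNReal

noncomputable section

abbrev Eucl (n : ℕ) := EuclideanSpace ℝ (Fin n)

variable {n : ℕ}

/-- The `d`-dimensional surface measure on `Γ`: Hausdorff measure `ℋ^d` restricted to `Γ`. -/
def sMeasure (d : ℝ) (Γ : Set (Eucl n)) : Measure (Eucl n) := (μH[d]).restrict Γ

/-- `Γ` is `d`-Ahlfors regular with constant `𝒜`, for radii `r` with `ofReal r < R`. -/
def AhlforsRegularWithin (d 𝒜 : ℝ) (Γ : Set (Eucl n)) (R : ℝ≥0∞) : Prop :=
  ∀ x ∈ Γ, ∀ r : ℝ, 0 < r → ENNReal.ofReal r < R →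
    ENNReal.ofReal (𝒜⁻¹ * r ^ d) ≤ sMeasure d Γ (ball x r) ∧
      sMeasure d Γ (ball x r) ≤ ENNReal.ofReal (𝒜 * r ^ d)

/-- A block in `Δ(z,ϱ) = Γ ∩ B(z,ϱ)`. -/
def IsBlock (Γ : Set (Eucl n)) (d : ℝ) (z : Eucl n) (ϱ : ℝ) (a : Eucl n → ℝ) : Prop :=
  (∀ x, x ∉ Γ ∩ ball z ϱ → a x = 0) ∧
  (∀ x ∈ Γ, |a x| ≤ ϱ ^ (-(d / 2))) ∧
  (∀ x ∈ Γ, ∀ y ∈ Γ, |a x - a y| ≤ dist x y * ϱ ^ (-(d / 2) - 1))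

/-- The `p`-th power of the Slobodeckij seminorm (double integral). -/
def sloboInt (d s p : ℝ) (σ : Measure (Eucl n)) (f : Eucl n → ℝ) : ℝ≥0∞ :=
  ∫⁻ x, ∫⁻ y, ENNReal.ofReal (|f x - f y| ^ p / dist x y ^ (d + p * s)) ∂σ ∂σ

/-!
The seminorm is subadditive, so `‖∑ λₖ aₖ‖ ≤ ∑ |λₖ| ‖aₖ‖`, and since `p ≤ 1` the `ℓ¹` sum of
`|λₖ| ϱₖ^(d/2 - θ)` is dominated by its `ℓ^p` quasi-norm, which is the right-hand side. It therefore
suffices to show `‖a‖_{Λ^{θ,1}} ≲ ϱ^(d/2 - θ)` for a single block `a` in `Δ(z, ϱ)`.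

For `x` near `z`, split the inner integral at `|x - y| = ϱ`: the Lipschitz bound leaves the
potential `|x - y|^(1-θ-d)` on the ball and the sup bound leaves `|x - y|^(-d-θ)` off it; both are
summed over dyadic shells around `x` using only the upper bound `σ(B(x, r)) ≲ r^d`. For
`|x - z| ≥ 2ϱ`, `a(x) = 0` and `|x - y| ≳ |x - z|` on the support, which leaves the tail
potential at `z`. Ahlfors regularity gives the upper bound only for `r < diam Γ`; for larger `r`,
`Γ` is covered by at most `5^n` balls of radius `3 diam Γ / 4` centred on `Γ`, by the
volume-packing bound for separated sets in `ℝ^n`.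
-/

open Filter Topology
open scoped NNReal

section Dyadic

variable {X : Type*} [MetricSpace X] [MeasurableSpace X] {μ : Measure X} {x : X} {d M : ℝ}

lemma measure_singleton_eq_zero_of_measure_ball_le (hd : 0 < d)
    (hμ : ∀ r, 0 < r → μ (ball x r) ≤ ENNReal.ofReal (M * r ^ d)) : μ {x} = 0 := by
  have hlim : Tendsto (fun r : ℝ => ENNReal.ofReal (M * r ^ d)) (𝓝[>] 0) (𝓝 0) := by
    have h : Tendsto (fun r : ℝ => M * r ^ d) (𝓝[>] 0) (𝓝 (M * 0 ^ d)) :=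
      ((continuous_const.mul (Real.continuous_rpow_const hd.le)).tendsto 0).mono_left
        nhdsWithin_le_nhds
    rw [Real.zero_rpow hd.ne', mul_zero] at h
    simpa using ENNReal.tendsto_ofReal h
  refine le_antisymm (ge_of_tendsto hlim ?_) zero_le
  filter_upwards [self_mem_nhdsWithin] with r hr
  exact (measure_mono (singleton_subset_iff.2 (mem_ball_self hr))).trans (hμ r hr)

variable [OpensMeasurableSpace X]

def dyadicShell (x : X) (r : ℝ) : Set X := closedBall x (2 * r) \ ball x r

lemma rpow_le_two_rpow_abs_mul {r u : ℝ} (hr : 0 < r) (hru : r ≤ u) (hu : u ≤ 2 * r) (e : ℝ) :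
    u ^ e ≤ 2 ^ |e| * r ^ e := by
  have h1 : 1 ≤ u / r := (one_le_div hr).2 hru
  calc u ^ e = (u / r) ^ e * r ^ e := by
        rw [Real.div_rpow (hr.le.trans hru) hr.le,
          div_mul_cancel₀ _ (Real.rpow_pos_of_pos hr e).ne']
  _ ≤ (u / r) ^ |e| * r ^ e := by
        gcongr ?_ * _
        exact Real.rpow_le_rpow_of_exponent_le h1 (le_abs_self e)
  _ ≤ 2 ^ |e| * r ^ e := by gcongr; exact (div_le_iff₀ hr).2 (by linarith)

lemma setLIntegral_dyadicShell_le (hμ : ∀ r, 0 < r → μ (ball x r) ≤ ENNReal.ofReal (M * r ^ d))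
    {r : ℝ} (hr : 0 < r) (e : ℝ) :
    ∫⁻ y in dyadicShell x r, ENNReal.ofReal (dist x y ^ e) ∂μ
      ≤ ENNReal.ofReal (2 ^ |e| * 3 ^ d * M * r ^ (e + d)) := by
  have hshell : MeasurableSet (dyadicShell x r) := measurableSet_closedBall.diff measurableSet_ball
  calc ∫⁻ y in dyadicShell x r, ENNReal.ofReal (dist x y ^ e) ∂μ
      ≤ ∫⁻ _ in dyadicShell x r, ENNReal.ofReal (2 ^ |e| * r ^ e) ∂μ := by
        refine setLIntegral_mono' hshell fun y ⟨hy2, hy1⟩ => ENNReal.ofReal_le_ofReal ?_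
        rw [mem_closedBall, dist_comm] at hy2
        rw [mem_ball, not_lt, dist_comm] at hy1
        exact rpow_le_two_rpow_abs_mul hr hy1 hy2 e
    _ = ENNReal.ofReal (2 ^ |e| * r ^ e) * μ (dyadicShell x r) := setLIntegral_const _ _
    _ ≤ ENNReal.ofReal (2 ^ |e| * r ^ e) * ENNReal.ofReal (M * (3 * r) ^ d) := by
        gcongr
        exact (measure_mono (sdiff_subset.trans (closedBall_subset_ball (by linarith)))).trans
          (hμ _ (by positivity))
    _ = ENNReal.ofReal (2 ^ |e| * 3 ^ d * M * r ^ (e + d)) := by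
        rw [← ENNReal.ofReal_mul (by positivity), Real.mul_rpow (by norm_num) hr.le,
          Real.rpow_add hr]
        ring_nf

lemma setLIntegral_le_tsum_dyadicShell (hd : 0 < d)
    (hμ : ∀ r, 0 < r → μ (ball x r) ≤ ENNReal.ofReal (M * r ^ d)) {s : Set X} {r : ℕ → ℝ}
    (hr : ∀ j, 0 < r j) (hs : s ⊆ {x} ∪ ⋃ j, dyadicShell x (r j)) (e : ℝ) :
    ∫⁻ y in s, ENNReal.ofReal (dist x y ^ e) ∂μ
      ≤ ∑' j, ENNReal.ofReal (2 ^ |e| * 3 ^ d * M * r j ^ (e + d)) :=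
  calc ∫⁻ y in s, ENNReal.ofReal (dist x y ^ e) ∂μ
      ≤ ∫⁻ y in {x} ∪ ⋃ j, dyadicShell x (r j), ENNReal.ofReal (dist x y ^ e) ∂μ :=
        lintegral_mono_set hs
    _ ≤ ∫⁻ y in {x}, ENNReal.ofReal (dist x y ^ e) ∂μ
          + ∫⁻ y in ⋃ j, dyadicShell x (r j), ENNReal.ofReal (dist x y ^ e) ∂μ :=
        lintegral_union_le _ _ _
    _ ≤ 0 + ∑' j, ∫⁻ y in dyadicShell x (r j), ENNReal.ofReal (dist x y ^ e) ∂μ := by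
        rw [setLIntegral_measure_zero _ _ (measure_singleton_eq_zero_of_measure_ball_le hd hμ)]
        exact add_le_add_right (lintegral_iUnion_le _ _) _
    _ ≤ ∑' j, ENNReal.ofReal (2 ^ |e| * 3 ^ d * M * r j ^ (e + d)) := by
        rw [zero_add]
        exact ENNReal.tsum_le_tsum fun j => setLIntegral_dyadicShell_le hμ (hr j) e

lemma tsum_ofReal_mul_pow {c q : ℝ} (hc : 0 ≤ c) (hq0 : 0 ≤ q) (hq1 : q < 1) :
    ∑' j : ℕ, ENNReal.ofReal (c * q ^ j) = ENNReal.ofReal (c / (1 - q)) := by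
  simp_rw [ENNReal.ofReal_mul hc, ENNReal.ofReal_pow hq0]
  rw [ENNReal.tsum_mul_left, ENNReal.tsum_geometric, ← ENNReal.ofReal_one,
    ← ENNReal.ofReal_sub _ hq0, ← ENNReal.ofReal_inv_of_pos (by linarith), ← ENNReal.ofReal_mul hc,
    div_eq_mul_inv]

lemma pow_mul_rpow {c ϱ : ℝ} (hc : 0 ≤ c) (hϱ : 0 ≤ ϱ) (j : ℕ) (s : ℝ) :
    (c ^ j * ϱ) ^ s = ϱ ^ s * (c ^ s) ^ j := by
  rw [Real.mul_rpow (pow_nonneg hc j) hϱ, Real.rpow_pow_comm hc, mul_comm]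

lemma setLIntegral_ball_dist_rpow_le (hd : 0 < d) (hM : 0 ≤ M)
    (hμ : ∀ r, 0 < r → μ (ball x r) ≤ ENNReal.ofReal (M * r ^ d)) {t ϱ : ℝ} (ht : 0 < t)
    (hϱ : 0 < ϱ) :
    ∫⁻ y in ball x ϱ, ENNReal.ofReal (dist x y ^ (t - d)) ∂μ
      ≤ ENNReal.ofReal (2 ^ |t - d| * 3 ^ d * M / (1 - 2 ^ (-t)) * ϱ ^ t) := by
  have hcover : ball x ϱ ⊆ {x} ∪ ⋃ j : ℕ, dyadicShell x (2⁻¹ ^ (j + 1) * ϱ) := by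
    intro y hy
    rcases eq_or_ne y x with rfl | hyx
    · exact Or.inl rfl
    have hu : 0 < dist x y := dist_pos.2 hyx.symm
    have hyϱ : dist x y < ϱ := by rw [dist_comm]; exact hy
    obtain ⟨j, hj1, hj2⟩ := exists_nat_pow_near ((one_le_div hu).2 hyϱ.le) one_lt_two
    rw [le_div_iff₀ hu] at hj1
    rw [div_lt_iff₀ hu] at hj2
    have hr : 2⁻¹ ^ (j + 1) * ϱ = ϱ / 2 ^ (j + 1) := by rw [inv_pow, inv_mul_eq_div]
    have h2r : 2 * (2⁻¹ ^ (j + 1) * ϱ) = ϱ / 2 ^ j := by rw [inv_pow, pow_succ]; field_simp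
    refine Or.inr (mem_iUnion.2 ⟨j, ?_, ?_⟩)
    · rw [mem_closedBall, dist_comm, h2r, le_div_iff₀ (by positivity)]
      linarith
    · rw [mem_ball, not_lt, dist_comm, hr, div_le_iff₀ (by positivity)]
      linarith
  have hq : (2:ℝ) ^ (-t) < 1 := Real.rpow_lt_one_of_one_lt_of_neg one_lt_two (by linarith)
  calc ∫⁻ y in ball x ϱ, ENNReal.ofReal (dist x y ^ (t - d)) ∂μ
      ≤ ∑' j : ℕ, ENNReal.ofReal (2 ^ |t - d| * 3 ^ d * M * (2⁻¹ ^ (j + 1) * ϱ) ^ (t - d + d)) :=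
        setLIntegral_le_tsum_dyadicShell hd hμ (fun j => by positivity) hcover _
    _ ≤ ∑' j : ℕ, ENNReal.ofReal (2 ^ |t - d| * 3 ^ d * M * ϱ ^ t * (2 ^ (-t)) ^ j) := by
        refine ENNReal.tsum_le_tsum fun j => ENNReal.ofReal_le_ofReal ?_
        rw [sub_add_cancel, pow_mul_rpow (by norm_num) hϱ.le, Real.inv_rpow zero_le_two,
          ← Real.rpow_neg zero_le_two, mul_assoc _ (ϱ ^ t)]
        gcongr _ * (_ * ?_)
        exact pow_le_pow_of_le_one (by positivity) hq.le (Nat.le_succ j)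
    _ = ENNReal.ofReal (2 ^ |t - d| * 3 ^ d * M / (1 - 2 ^ (-t)) * ϱ ^ t) := by
        rw [tsum_ofReal_mul_pow (by positivity) (by positivity) hq]
        ring_nf

lemma setLIntegral_compl_ball_dist_rpow_le (hd : 0 < d) (hM : 0 ≤ M)
    (hμ : ∀ r, 0 < r → μ (ball x r) ≤ ENNReal.ofReal (M * r ^ d)) {t ϱ : ℝ} (ht : 0 < t)
    (hϱ : 0 < ϱ) :
    ∫⁻ y in (ball x ϱ)ᶜ, ENNReal.ofReal (dist x y ^ (-(d + t))) ∂μ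
      ≤ ENNReal.ofReal (2 ^ (d + t) * 3 ^ d * M / (1 - 2 ^ (-t)) * ϱ ^ (-t)) := by
  have hcover : (ball x ϱ)ᶜ ⊆ {x} ∪ ⋃ j : ℕ, dyadicShell x (2 ^ j * ϱ) := by
    intro y hy
    rw [mem_compl_iff, mem_ball, not_lt, dist_comm] at hy
    obtain ⟨j, hj1, hj2⟩ := exists_nat_pow_near ((one_le_div hϱ).2 hy) one_lt_two
    rw [le_div_iff₀ hϱ] at hj1
    rw [div_lt_iff₀ hϱ] at hj2
    refine Or.inr (mem_iUnion.2 ⟨j, ?_, ?_⟩)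
    · rw [mem_closedBall, dist_comm]
      rw [pow_succ] at hj2
      linarith
    · rw [mem_ball, not_lt, dist_comm]
      exact hj1
  have hq : (2:ℝ) ^ (-t) < 1 := Real.rpow_lt_one_of_one_lt_of_neg one_lt_two (by linarith)
  calc ∫⁻ y in (ball x ϱ)ᶜ, ENNReal.ofReal (dist x y ^ (-(d + t))) ∂μ
      ≤ ∑' j : ℕ, ENNReal.ofReal (2 ^ |-(d + t)| * 3 ^ d * M * (2 ^ j * ϱ) ^ (-(d + t) + d)) :=
        setLIntegral_le_tsum_dyadicShell hd hμ (fun j => by positivity) hcover _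
    _ = ∑' j : ℕ, ENNReal.ofReal (2 ^ (d + t) * 3 ^ d * M * ϱ ^ (-t) * (2 ^ (-t)) ^ j) := by
        congr! 3 with j
        rw [abs_neg, abs_of_pos (by linarith), show -(d + t) + d = -t by ring,
          pow_mul_rpow zero_le_two hϱ.le]
        ring
    _ = ENNReal.ofReal (2 ^ (d + t) * 3 ^ d * M / (1 - 2 ^ (-t)) * ϱ ^ (-t)) := by
        rw [tsum_ofReal_mul_pow (by positivity) (by positivity) hq]
        ring_nf

end Dyadic

section Packing

variable {E : Type*} [NormedAddCommGroup E] [NormedSpace ℝ E] [FiniteDimensional ℝ E]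

lemma card_le_five_pow_of_separated {s : Finset E} {x : E} {ε : ℝ} (hε : 0 < ε)
    (hs : ∀ c ∈ s, dist c x ≤ 2 * ε) (hsep : ∀ c ∈ s, ∀ c' ∈ s, c ≠ c' → ε < dist c c') :
    s.card ≤ 5 ^ Module.finrank ℝ E := by
  classical
  have hinj : Function.Injective fun c : E => ε⁻¹ • (c - x) := fun c c' h => by
    simpa [smul_right_inj (inv_ne_zero hε.ne')] using h
  rw [← Finset.card_image_of_injective s hinj]
  refine Besicovitch.card_le_of_separated _ ?_ ?_ <;> simp only [Finset.mem_image]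
  · rintro _ ⟨c, hc, rfl⟩
    rw [norm_smul, norm_inv, Real.norm_of_nonneg hε.le, ← dist_eq_norm, inv_mul_le_iff₀ hε]
    linarith [hs c hc]
  · rintro _ ⟨c, hc, rfl⟩ _ ⟨c', hc', rfl⟩ hne
    rw [← smul_sub, sub_sub_sub_cancel_right, norm_smul, norm_inv, Real.norm_of_nonneg hε.le,
      ← dist_eq_norm, le_inv_mul_iff₀ hε, mul_one]
    exact (hsep c hc c' hc' fun h => hne (h ▸ rfl)).le

lemma packingNumber_le_five_pow {A : Set E} {x : E} {ε : ℝ≥0} (hε : 0 < ε)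
    (hA : A ⊆ closedBall x (2 * ε)) : packingNumber ε A ≤ 5 ^ Module.finrank ℝ E := by
  refine iSup₂_le fun C hCA => iSup_le fun hsep => ?_
  by_contra! hlt
  obtain ⟨t, htC, ht⟩ := Set.exists_subset_encard_eq (Order.add_one_le_of_lt hlt)
  have htfin : t.Finite :=
    Set.finite_of_encard_eq_coe (k := 5 ^ Module.finrank ℝ E + 1) (by simpa using ht)
  rw [htfin.encard_eq_coe_toFinset_card] at ht
  have hcard := card_le_five_pow_of_separated (s := htfin.toFinset) (x := x) (ε := ε) hε
    (fun c hc => hA (hCA (htC (htfin.mem_toFinset.1 hc))))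
    (fun c hc c' hc' hne => by
      have : (ε : ℝ≥0∞) < edist c c' :=
        hsep (htC (htfin.mem_toFinset.1 hc)) (htC (htfin.mem_toFinset.1 hc')) hne
      rwa [edist_dist, ← ENNReal.ofReal_coe_nnreal, ENNReal.ofReal_lt_ofReal_iff_of_nonneg
        ε.coe_nonneg] at this)
  have : htfin.toFinset.card = 5 ^ Module.finrank ℝ E + 1 := by exact_mod_cast ht
  omega

lemma exists_finite_cover_ball {A : Set E} {x : E} {ε δ : ℝ} (hε : 0 < ε)
    (hA : A ⊆ closedBall x (2 * ε)) (hδ : ε < δ) :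
    ∃ C ⊆ A, C.encard ≤ 5 ^ Module.finrank ℝ E ∧ A ⊆ ⋃ y ∈ C, ball y δ := by
  lift ε to ℝ≥0 using hε.le
  have hpack := packingNumber_le_five_pow (by exact_mod_cast hε) hA
  have hfin : packingNumber ε A ≠ ⊤ := ne_top_of_le_ne_top (by simp) hpack
  refine ⟨_, maximalSeparatedSet_subset, (encard_maximalSeparatedSet hfin).trans_le hpack,
    fun z hz => ?_⟩
  obtain ⟨y, hyC, hzy⟩ := isCover_maximalSeparatedSet hfin hz
  have : dist z y ≤ ε := by rw [← coe_nndist]; exact_mod_cast edist_le_coe.1 hzy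
  exact mem_biUnion hyC (mem_ball.2 (by linarith))

end Packing

section Ahlfors

lemma hausdorffMeasure_eq_zero_of_subsingleton {X : Type*} [EMetricSpace X] [MeasurableSpace X]
    [BorelSpace X] {s : Set X} (hs : s.Subsingleton) {d : ℝ} (hd : 0 < d) : μH[d] s = 0 := by
  have h := hausdorffMeasure_of_dimH_lt (s := s) (d := d.toNNReal)
    (by rw [hs.dimH_zero]; exact_mod_cast Real.toNNReal_pos.2 hd)
  rwa [Real.coe_toNNReal d hd.le] at h

lemma hausdorffMeasure_le_of_ahlforsRegularWithin {d 𝒜 : ℝ} {Γ : Set (Eucl n)} (hd : 0 < d)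
    (h𝒜 : 0 ≤ 𝒜) (hreg : AhlforsRegularWithin d 𝒜 Γ (ediam Γ)) {x : Eucl n} (hx : x ∈ Γ) {r : ℝ}
    (hr : 0 < r) (hΓr : ediam Γ ≤ ENNReal.ofReal r) :
    μH[d] Γ ≤ ENNReal.ofReal (5 ^ n * 𝒜 * r ^ d) := by
  rcases eq_or_ne (ediam Γ) 0 with h0 | h0
  · rw [hausdorffMeasure_eq_zero_of_subsingleton (ediam_eq_zero_iff.1 h0) hd]
    exact zero_le
  have htop : ediam Γ ≠ ⊤ := ne_top_of_le_ne_top ENNReal.ofReal_ne_top hΓr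
  set D := (ediam Γ).toReal
  have hD : 0 < D := ENNReal.toReal_pos h0 htop
  have hsub : Γ ⊆ closedBall x (2 * (D / 2)) := fun y hy => by
    rw [mul_div_cancel₀ _ two_ne_zero, mem_closedBall, dist_edist]
    exact ENNReal.toReal_mono htop (edist_le_ediam_of_mem hy hx)
  obtain ⟨C, hCΓ, hCcard, hcover⟩ := exists_finite_cover_ball (by positivity) hsub
    (by linarith : D / 2 < 3 / 4 * D)
  rw [finrank_euclideanSpace_fin] at hCcard
  have hC : (C.encard : ℝ≥0∞) ≤ 5 ^ n := by simpa using ENat.toENNReal_le.2 hCcard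
  have hball : ∀ y ∈ C, sMeasure d Γ (ball y (3 / 4 * D)) ≤ ENNReal.ofReal (𝒜 * (3 / 4 * D) ^ d) :=
    fun y hy => (hreg y (hCΓ hy) _ (by positivity) (by
      rw [← ENNReal.ofReal_toReal htop, ENNReal.ofReal_lt_ofReal_iff hD]
      linarith)).2
  calc μH[d] Γ = sMeasure d Γ (⋃ y ∈ C, ball y (3 / 4 * D)) :=
        (Measure.restrict_apply_superset hcover).symm
    _ ≤ ∑' y : C, sMeasure d Γ (ball (y : Eucl n) (3 / 4 * D)) :=
        measure_biUnion_le _ (Set.finite_of_encard_le_coe hCcard).countable _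
    _ ≤ ∑' _ : C, ENNReal.ofReal (𝒜 * (3 / 4 * D) ^ d) :=
        ENNReal.tsum_le_tsum fun y => hball y y.2
    _ = C.encard * ENNReal.ofReal (𝒜 * (3 / 4 * D) ^ d) := ENNReal.tsum_set_const _ _
    _ ≤ 5 ^ n * ENNReal.ofReal (𝒜 * (3 / 4 * D) ^ d) := by gcongr
    _ ≤ ENNReal.ofReal (5 ^ n * 𝒜 * r ^ d) := by
        rw [mul_assoc, ENNReal.ofReal_mul (p := (5:ℝ) ^ n) (by positivity),
          ENNReal.ofReal_pow (by norm_num), ENNReal.ofReal_ofNat]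
        gcongr
        linarith [ENNReal.toReal_le_of_le_ofReal hr.le hΓr]

lemma sMeasure_ball_le_of_ahlforsRegularWithin {d 𝒜 : ℝ} {Γ : Set (Eucl n)} (hd : 0 < d)
    (h𝒜 : 0 ≤ 𝒜) (hreg : AhlforsRegularWithin d 𝒜 Γ (ediam Γ)) {x : Eucl n} (hx : x ∈ Γ)
    {r : ℝ} (hr : 0 < r) : sMeasure d Γ (ball x r) ≤ ENNReal.ofReal (5 ^ n * 𝒜 * r ^ d) := by
  rcases lt_or_ge (ENNReal.ofReal r) (ediam Γ) with hlt | hge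
  · refine (hreg x hx r hr hlt).2.trans (ENNReal.ofReal_le_ofReal ?_)
    rw [mul_assoc]
    exact le_mul_of_one_le_left (by positivity) (one_le_pow₀ (by norm_num))
  · exact ((measure_mono (subset_univ _)).trans_eq (Measure.restrict_apply_univ _)).trans
      (hausdorffMeasure_le_of_ahlforsRegularWithin hd h𝒜 hreg hx hr hge)

lemma sigmaFinite_of_measure_ball_lt_top {X : Type*} [PseudoMetricSpace X] [MeasurableSpace X]
    {μ : Measure X} (x₀ : X) (h : ∀ r, 0 < r → μ (ball x₀ r) < ∞) : SigmaFinite μ :=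
  ⟨⟨⟨fun m : ℕ => ball x₀ (m + 1), fun _ => trivial, fun _ => h _ (by positivity),
    iUnion_ball_nat_succ x₀⟩⟩⟩

end Ahlfors

section Block

variable {Γ : Set (Eucl n)} {d θ : ℝ} {z : Eucl n} {ϱ : ℝ} {a : Eucl n → ℝ}

lemma IsBlock.measurable (hΓ : IsClosed Γ) (hb : IsBlock Γ d z ϱ a) : Measurable a := by
  classical
  have hcont : ContinuousOn a Γ :=
    (LipschitzOnWith.of_dist_le_mul (K := (ϱ ^ (-(d / 2) - 1)).toNNReal) fun x hx y hy => by
      rw [Real.dist_eq, mul_comm]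
      exact (hb.2.2 x hx y hy).trans (by gcongr; exact Real.le_coe_toNNReal _)).continuousOn
  have ha : Γ.piecewise a 0 = a := funext fun x => by
    by_cases hx : x ∈ Γ
    · simp [hx]
    · simp [hx, hb.1 x fun h => hx h.1]
  rw [← ha]
  exact hcont.measurable_piecewise continuousOn_const hΓ.measurableSet

lemma IsBlock.abs_sub_le (hb : IsBlock Γ d z ϱ a) {x y : Eucl n} (hx : x ∈ Γ) (hy : y ∈ Γ) :
    |a x - a y| ≤ 2 * ϱ ^ (-(d / 2)) := by
  linarith [abs_sub (a x) (a y), hb.2.1 x hx, hb.2.1 y hy]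

lemma IsBlock.abs_sub_div_le (hb : IsBlock Γ d z ϱ a) (hϱ : 0 < ϱ) {x y : Eucl n} (hx : x ∈ Γ)
    (hy : y ∈ Γ) :
    |a x - a y| / dist x y ^ (d + θ) ≤ ϱ ^ (-(d / 2) - 1) * dist x y ^ (1 - θ - d) := by
  rcases eq_or_lt_of_le (dist_nonneg : 0 ≤ dist x y) with h0 | hpos
  · rw [dist_eq_zero.1 h0.symm, sub_self, abs_zero, zero_div]
    positivity
  calc |a x - a y| / dist x y ^ (d + θ)
      ≤ dist x y * ϱ ^ (-(d / 2) - 1) / dist x y ^ (d + θ) := by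
        gcongr
        exact hb.2.2 x hx y hy
    _ = ϱ ^ (-(d / 2) - 1) * dist x y ^ (1 - θ - d) := by
        rw [show 1 - θ - d = 1 - (d + θ) by ring, Real.rpow_sub hpos, Real.rpow_one]
        ring

variable {μ : Measure (Eucl n)} {x : Eucl n}

lemma IsBlock.lintegral_le_of_mem (hb : IsBlock Γ d z ϱ a) (hμΓ : ∀ᵐ y ∂μ, y ∈ Γ) (hϱ : 0 < ϱ)
    (hx : x ∈ Γ) {KB KC : ℝ} (hKB : 0 ≤ KB) (hKC : 0 ≤ KC)
    (hnear : ∫⁻ y in ball x ϱ, ENNReal.ofReal (dist x y ^ (1 - θ - d)) ∂μ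
      ≤ ENNReal.ofReal (KB * ϱ ^ (1 - θ)))
    (hfar : ∫⁻ y in (ball x ϱ)ᶜ, ENNReal.ofReal (dist x y ^ (-(d + θ))) ∂μ
      ≤ ENNReal.ofReal (KC * ϱ ^ (-θ))) :
    ∫⁻ y, ENNReal.ofReal (|a x - a y| / dist x y ^ (d + θ)) ∂μ
      ≤ ENNReal.ofReal ((KB + 2 * KC) * ϱ ^ (-(d / 2) - θ)) := by
  set L := ϱ ^ (-(d / 2) - 1)
  set A := ϱ ^ (-(d / 2))
  have hclose : ∀ᵐ y ∂μ, y ∈ ball x ϱ → ENNReal.ofReal (|a x - a y| / dist x y ^ (d + θ))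
      ≤ ENNReal.ofReal L * ENNReal.ofReal (dist x y ^ (1 - θ - d)) :=
    hμΓ.mono fun y hy _ => by
      rw [← ENNReal.ofReal_mul (by positivity)]
      exact ENNReal.ofReal_le_ofReal (hb.abs_sub_div_le hϱ hx hy)
  have hdistant : ∀ᵐ y ∂μ, y ∈ (ball x ϱ)ᶜ → ENNReal.ofReal (|a x - a y| / dist x y ^ (d + θ))
      ≤ ENNReal.ofReal (2 * A) * ENNReal.ofReal (dist x y ^ (-(d + θ))) :=
    hμΓ.mono fun y hy _ => by
      rw [← ENNReal.ofReal_mul (by positivity), Real.rpow_neg dist_nonneg, ← div_eq_mul_inv]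
      exact ENNReal.ofReal_le_ofReal
        (div_le_div_of_nonneg_right (hb.abs_sub_le hx hy) (by positivity))
  have e1 : L * ϱ ^ (1 - θ) = ϱ ^ (-(d / 2) - θ) := by rw [← Real.rpow_add hϱ]; ring_nf
  have e2 : A * ϱ ^ (-θ) = ϱ ^ (-(d / 2) - θ) := by rw [← Real.rpow_add hϱ]; ring_nf
  calc ∫⁻ y, ENNReal.ofReal (|a x - a y| / dist x y ^ (d + θ)) ∂μ
      = ∫⁻ y in ball x ϱ, ENNReal.ofReal (|a x - a y| / dist x y ^ (d + θ)) ∂μ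
        + ∫⁻ y in (ball x ϱ)ᶜ, ENNReal.ofReal (|a x - a y| / dist x y ^ (d + θ)) ∂μ :=
        (lintegral_add_compl _ measurableSet_ball).symm
    _ ≤ ∫⁻ y in ball x ϱ, ENNReal.ofReal L * ENNReal.ofReal (dist x y ^ (1 - θ - d)) ∂μ
        + ∫⁻ y in (ball x ϱ)ᶜ, ENNReal.ofReal (2 * A) * ENNReal.ofReal (dist x y ^ (-(d + θ))) ∂μ :=
        add_le_add (setLIntegral_mono_ae' measurableSet_ball hclose)
          (setLIntegral_mono_ae' measurableSet_ball.compl hdistant)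
    _ ≤ ENNReal.ofReal L * ENNReal.ofReal (KB * ϱ ^ (1 - θ))
        + ENNReal.ofReal (2 * A) * ENNReal.ofReal (KC * ϱ ^ (-θ)) := by
        rw [lintegral_const_mul' _ _ ENNReal.ofReal_ne_top,
          lintegral_const_mul' _ _ ENNReal.ofReal_ne_top]
        gcongr
    _ = ENNReal.ofReal ((KB + 2 * KC) * ϱ ^ (-(d / 2) - θ)) := by
        rw [← ENNReal.ofReal_mul (by positivity), ← ENNReal.ofReal_mul (by positivity),
          ← ENNReal.ofReal_add (by positivity) (by positivity)]
        congr 1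
        linear_combination KB * e1 + 2 * KC * e2

lemma IsBlock.lintegral_le_of_two_mul_le_dist (hb : IsBlock Γ d z ϱ a) (hμΓ : ∀ᵐ y ∂μ, y ∈ Γ)
    (hϱ : 0 < ϱ) (hdθ : 0 ≤ d + θ) {M : ℝ} (hM : 0 ≤ M)
    (hμz : μ (ball z ϱ) ≤ ENNReal.ofReal (M * ϱ ^ d)) (hxz : 2 * ϱ ≤ dist x z) :
    ∫⁻ y, ENNReal.ofReal (|a x - a y| / dist x y ^ (d + θ)) ∂μ
      ≤ ENNReal.ofReal (2 ^ (d + θ) * M * ϱ ^ (d / 2))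
        * ENNReal.ofReal (dist z x ^ (-(d + θ))) := by
  set c := 2 ^ (d + θ) * ϱ ^ (-(d / 2)) * dist z x ^ (-(d + θ)) with hc
  have hax : a x = 0 := hb.1 x fun h => by linarith [mem_ball.1 h.2]
  have hpt : ∀ᵐ y ∂μ, ENNReal.ofReal (|a x - a y| / dist x y ^ (d + θ))
      ≤ (ball z ϱ).indicator (fun _ => ENNReal.ofReal c) y := by
    filter_upwards [hμΓ] with y hy
    by_cases hyz : y ∈ ball z ϱ
    · rw [indicator_of_mem hyz]
      refine ENNReal.ofReal_le_ofReal ?_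
      have hxy : dist x z / 2 ≤ dist x y := by
        linarith [dist_triangle x y z, mem_ball.1 hyz]
      have hxz0 : 0 < dist x z / 2 := by linarith
      calc |a x - a y| / dist x y ^ (d + θ) ≤ ϱ ^ (-(d / 2)) / (dist x z / 2) ^ (d + θ) := by
            rw [hax, zero_sub, abs_neg]
            gcongr
            exact hb.2.1 y hy
        _ = c := by
            rw [hc, Real.div_rpow dist_nonneg zero_le_two, Real.rpow_neg dist_nonneg, dist_comm z x]
            field_simp
    · rw [indicator_of_notMem hyz, hax, hb.1 y fun h => hyz h.2, sub_zero, abs_zero, zero_div,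
        ENNReal.ofReal_zero]
  have e : ϱ ^ (-(d / 2)) * ϱ ^ d = ϱ ^ (d / 2) := by rw [← Real.rpow_add hϱ]; ring_nf
  calc ∫⁻ y, ENNReal.ofReal (|a x - a y| / dist x y ^ (d + θ)) ∂μ
      ≤ ENNReal.ofReal c * μ (ball z ϱ) :=
        (lintegral_mono_ae hpt).trans_eq (lintegral_indicator_const measurableSet_ball _)
    _ ≤ ENNReal.ofReal c * ENNReal.ofReal (M * ϱ ^ d) := by gcongr
    _ = ENNReal.ofReal (2 ^ (d + θ) * M * ϱ ^ (d / 2))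
          * ENNReal.ofReal (dist z x ^ (-(d + θ))) := by
        rw [← ENNReal.ofReal_mul (by positivity), ← ENNReal.ofReal_mul (by positivity), hc, ← e]
        ring_nf

lemma IsBlock.sloboInt_le (hb : IsBlock Γ d z ϱ a) (hμΓ : ∀ᵐ y ∂μ, y ∈ Γ) (hϱ : 0 < ϱ)
    (hdθ : 0 ≤ d + θ) {M K₁ K₂ : ℝ} (hM : 0 ≤ M) (hK₁ : 0 ≤ K₁) (hK₂ : 0 ≤ K₂)
    (hμz : ∀ r, 0 < r → μ (ball z r) ≤ ENNReal.ofReal (M * r ^ d))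
    (hinner : ∀ x ∈ Γ, ∫⁻ y, ENNReal.ofReal (|a x - a y| / dist x y ^ (d + θ)) ∂μ
      ≤ ENNReal.ofReal (K₁ * ϱ ^ (-(d / 2) - θ)))
    (htail : ∫⁻ x in (ball z (2 * ϱ))ᶜ, ENNReal.ofReal (dist z x ^ (-(d + θ))) ∂μ
      ≤ ENNReal.ofReal (K₂ * (2 * ϱ) ^ (-θ))) :
    sloboInt d θ 1 μ a
      ≤ ENNReal.ofReal ((K₁ * 2 ^ d * M + 2 ^ (d + θ) * 2 ^ (-θ) * M * K₂) * ϱ ^ (d / 2 - θ)) := by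
  set c := 2 ^ (d + θ) * M * ϱ ^ (d / 2)
  have hfar : ∀ x ∈ (ball z (2 * ϱ))ᶜ,
      ∫⁻ y, ENNReal.ofReal (|a x - a y| / dist x y ^ (d + θ)) ∂μ
        ≤ ENNReal.ofReal c * ENNReal.ofReal (dist z x ^ (-(d + θ))) := fun x hx => by
    rw [mem_compl_iff, mem_ball, not_lt] at hx
    exact hb.lintegral_le_of_two_mul_le_dist hμΓ hϱ hdθ hM (hμz ϱ hϱ) hx
  have e1 : ϱ ^ (-(d / 2) - θ) * ϱ ^ d = ϱ ^ (d / 2 - θ) := by rw [← Real.rpow_add hϱ]; ring_nf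
  have e2 : ϱ ^ (d / 2) * ϱ ^ (-θ) = ϱ ^ (d / 2 - θ) := by rw [← Real.rpow_add hϱ]; ring_nf
  calc sloboInt d θ 1 μ a
      = ∫⁻ x in ball z (2 * ϱ), ∫⁻ y, ENNReal.ofReal (|a x - a y| / dist x y ^ (d + θ)) ∂μ ∂μ
        + ∫⁻ x in (ball z (2 * ϱ))ᶜ,
            ∫⁻ y, ENNReal.ofReal (|a x - a y| / dist x y ^ (d + θ)) ∂μ ∂μ := by
        simp only [sloboInt, Real.rpow_one, one_mul]
        exact (lintegral_add_compl _ measurableSet_ball).symm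
    _ ≤ ∫⁻ _ in ball z (2 * ϱ), ENNReal.ofReal (K₁ * ϱ ^ (-(d / 2) - θ)) ∂μ
        + ∫⁻ x in (ball z (2 * ϱ))ᶜ, ENNReal.ofReal c * ENNReal.ofReal (dist z x ^ (-(d + θ))) ∂μ :=
        add_le_add (setLIntegral_mono_ae' measurableSet_ball (hμΓ.mono fun x hx _ => hinner x hx))
          (setLIntegral_mono' measurableSet_ball.compl hfar)
    _ ≤ ENNReal.ofReal (K₁ * ϱ ^ (-(d / 2) - θ)) * ENNReal.ofReal (M * (2 * ϱ) ^ d)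
        + ENNReal.ofReal c * ENNReal.ofReal (K₂ * (2 * ϱ) ^ (-θ)) := by
        rw [setLIntegral_const, lintegral_const_mul' _ _ ENNReal.ofReal_ne_top]
        gcongr
        exact hμz _ (by linarith)
    _ = ENNReal.ofReal ((K₁ * 2 ^ d * M + 2 ^ (d + θ) * 2 ^ (-θ) * M * K₂) * ϱ ^ (d / 2 - θ)) := by
        rw [← ENNReal.ofReal_mul (by positivity), ← ENNReal.ofReal_mul (by positivity),
          ← ENNReal.ofReal_add (by positivity) (by positivity), Real.mul_rpow zero_le_two hϱ.le,
          Real.mul_rpow zero_le_two hϱ.le]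
        congr 1
        linear_combination K₁ * 2 ^ d * M * e1 + 2 ^ (d + θ) * 2 ^ (-θ) * M * K₂ * e2

end Block

theorem sloboInt_block_le {d θ M : ℝ} (hd : 0 < d) (hM : 0 < M) (hθ0 : 0 < θ) (hθ1 : θ < 1) :
    ∃ C > 0, ∀ (μ : Measure (Eucl n)) (Γ : Set (Eucl n)) (z : Eucl n) (ϱ : ℝ) (a : Eucl n → ℝ),
      (∀ᵐ y ∂μ, y ∈ Γ) → (∀ x ∈ Γ, ∀ r, 0 < r → μ (ball x r) ≤ ENNReal.ofReal (M * r ^ d)) →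
      z ∈ Γ → 0 < ϱ → IsBlock Γ d z ϱ a →
      sloboInt d θ 1 μ a ≤ ENNReal.ofReal (C * ϱ ^ (d / 2 - θ)) := by
  have hq : ∀ t : ℝ, 0 < t → 0 < 1 - (2:ℝ) ^ (-t) := fun t ht =>
    sub_pos.2 (Real.rpow_lt_one_of_one_lt_of_neg one_lt_two (by linarith))
  set KB := 2 ^ |1 - θ - d| * 3 ^ d * M / (1 - 2 ^ (-(1 - θ)))
  set KC := 2 ^ (d + θ) * 3 ^ d * M / (1 - 2 ^ (-θ))
  have hKB : 0 < KB := div_pos (by positivity) (hq _ (by linarith))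
  have hKC : 0 < KC := div_pos (by positivity) (hq _ hθ0)
  refine ⟨(KB + 2 * KC) * 2 ^ d * M + 2 ^ (d + θ) * 2 ^ (-θ) * M * KC, by positivity,
    fun μ Γ z ϱ a hμΓ hμ hz hϱ hb => ?_⟩
  exact hb.sloboInt_le hμΓ hϱ (by linarith) hM.le (by positivity) hKC.le (hμ z hz)
    (fun x hx => hb.lintegral_le_of_mem hμΓ hϱ hx hKB.le hKC.le
      (setLIntegral_ball_dist_rpow_le hd hM.le (hμ x hx) (by linarith) hϱ)
      (setLIntegral_compl_ball_dist_rpow_le hd hM.le (hμ x hx) hθ0 hϱ))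
    (setLIntegral_compl_ball_dist_rpow_le hd hM.le (hμ z hz) hθ0 (by linarith))

lemma sloboInt_sum_le {σ : Measure (Eucl n)} [SFinite σ] {d θ : ℝ} {ι : Type*} (F : Finset ι)
    (lam : ι → ℝ) (a : ι → Eucl n → ℝ) (ha : ∀ k ∈ F, Measurable (a k)) :
    sloboInt d θ 1 σ (fun x => ∑ k ∈ F, lam k * a k x)
      ≤ ∑ k ∈ F, ENNReal.ofReal |lam k| * sloboInt d θ 1 σ (a k) := by
  set G : ι → Eucl n × Eucl n → ℝ≥0∞ :=
    fun k q => ENNReal.ofReal (|a k q.1 - a k q.2| / dist q.1 q.2 ^ (d + θ))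
  have hG : ∀ k ∈ F, Measurable (G k) := fun k hk => by
    have := ha k hk
    fun_prop
  have hpt : ∀ x y, ENNReal.ofReal
      (|(∑ k ∈ F, lam k * a k x) - ∑ k ∈ F, lam k * a k y| / dist x y ^ (d + θ))
        ≤ ∑ k ∈ F, ENNReal.ofReal |lam k| * G k (x, y) := fun x y => by
    simp only [G]
    simp_rw [← ENNReal.ofReal_mul (abs_nonneg _)]
    rw [← ENNReal.ofReal_sum_of_nonneg fun k _ => by positivity]
    refine ENNReal.ofReal_le_ofReal ?_
    simp_rw [← mul_div_assoc, ← Finset.sum_div, ← Finset.sum_sub_distrib, ← mul_sub, ← abs_mul]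
    gcongr
    exact Finset.abs_sum_le_sum_abs _ _
  simp only [sloboInt, Real.rpow_one, one_mul]
  calc ∫⁻ x, ∫⁻ y, ENNReal.ofReal
        (|(∑ k ∈ F, lam k * a k x) - ∑ k ∈ F, lam k * a k y| / dist x y ^ (d + θ)) ∂σ ∂σ
      ≤ ∫⁻ x, ∫⁻ y, ∑ k ∈ F, ENNReal.ofReal |lam k| * G k (x, y) ∂σ ∂σ :=
        lintegral_mono fun x => lintegral_mono fun y => hpt x y
    _ = ∫⁻ x, ∑ k ∈ F, ENNReal.ofReal |lam k| * ∫⁻ y, G k (x, y) ∂σ ∂σ := by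
        refine lintegral_congr fun x => ?_
        rw [lintegral_finsetSum' (f := fun k y => ENNReal.ofReal |lam k| * G k (x, y)) _
          fun k hk => (((hG k hk).comp measurable_prodMk_left).const_mul _).aemeasurable]
        simp_rw [lintegral_const_mul' _ _ ENNReal.ofReal_ne_top]
    _ = ∑ k ∈ F, ENNReal.ofReal |lam k| * ∫⁻ x, ∫⁻ y, G k (x, y) ∂σ ∂σ := by
        rw [lintegral_finsetSum' _ fun k hk =>
          ((hG k hk).lintegral_prod_right'.const_mul _).aemeasurable]
        simp_rw [lintegral_const_mul' _ _ ENNReal.ofReal_ne_top]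

lemma rpow_sum_le_sum_rpow {ι : Type*} (s : Finset ι) {u : ι → ℝ} (hu : ∀ i ∈ s, 0 ≤ u i)
    {p : ℝ} (hp0 : 0 < p) (hp1 : p ≤ 1) : (∑ i ∈ s, u i) ^ p ≤ ∑ i ∈ s, u i ^ p := by
  classical
  induction s using Finset.induction_on with
  | empty => simp [Real.zero_rpow hp0.ne']
  | insert i s hi ih =>
    rw [Finset.sum_insert hi, Finset.sum_insert hi]
    have hs := fun j hj => hu j (Finset.mem_insert_of_mem hj)
    exact (Real.rpow_add_le_add_rpow (hu i (Finset.mem_insert_self i s))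
      (Finset.sum_nonneg hs) hp0.le hp1).trans (add_le_add_right (ih hs) _)

lemma sum_le_rpow_sum_rpow_one_div {ι : Type*} (s : Finset ι) {u : ι → ℝ}
    (hu : ∀ i ∈ s, 0 ≤ u i) {p : ℝ} (hp0 : 0 < p) (hp1 : p ≤ 1) :
    ∑ i ∈ s, u i ≤ (∑ i ∈ s, u i ^ p) ^ (1 / p) :=
  calc ∑ i ∈ s, u i = ((∑ i ∈ s, u i) ^ p) ^ (1 / p) := by
        rw [← Real.rpow_mul (Finset.sum_nonneg hu), mul_one_div_cancel hp0.ne', Real.rpow_one]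
    _ ≤ (∑ i ∈ s, u i ^ p) ^ (1 / p) :=
        Real.rpow_le_rpow (Real.rpow_nonneg (Finset.sum_nonneg hu) _)
          (rpow_sum_le_sum_rpow s hu hp0 hp1) (by positivity)

lemma sum_ofReal_abs_mul_rpow_le {ι : Type*} (F : Finset ι) (lam ϱ : ι → ℝ)
    (hϱ : ∀ k ∈ F, 0 < ϱ k) {C d s p : ℝ} (hC : 0 ≤ C) (hp0 : 0 < p) (hp1 : p ≤ 1) :
    ∑ k ∈ F, ENNReal.ofReal |lam k| * ENNReal.ofReal (C * ϱ k ^ (d / 2 - (s + d - d / p)))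
      ≤ ENNReal.ofReal (C * (∑ k ∈ F, |lam k| ^ p * ϱ k ^ (d - d * p / 2 - s * p)) ^ (1 / p)) := by
  have hexp : ∀ k ∈ F, (|lam k| * ϱ k ^ (d / 2 - (s + d - d / p))) ^ p
      = |lam k| ^ p * ϱ k ^ (d - d * p / 2 - s * p) := fun k hk => by
    rw [Real.mul_rpow (abs_nonneg _) (Real.rpow_nonneg (hϱ k hk).le _),
      ← Real.rpow_mul (hϱ k hk).le]
    congr 2
    field_simp
    ring
  have hu : ∀ k ∈ F, 0 ≤ |lam k| * ϱ k ^ (d / 2 - (s + d - d / p)) := fun k hk => by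
    have := hϱ k hk
    positivity
  calc ∑ k ∈ F, ENNReal.ofReal |lam k| * ENNReal.ofReal (C * ϱ k ^ (d / 2 - (s + d - d / p)))
      = ENNReal.ofReal (C * ∑ k ∈ F, |lam k| * ϱ k ^ (d / 2 - (s + d - d / p))) := by
        rw [Finset.mul_sum, ENNReal.ofReal_sum_of_nonneg fun k hk => mul_nonneg hC (hu k hk)]
        refine Finset.sum_congr rfl fun k _ => ?_
        rw [← ENNReal.ofReal_mul (abs_nonneg _)]
        ring_nf
    _ ≤ ENNReal.ofReal (C * (∑ k ∈ F, |lam k| ^ p * ϱ k ^ (d - d * p / 2 - s * p)) ^ (1 / p)) := by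
        rw [← Finset.sum_congr rfl hexp]
        exact ENNReal.ofReal_le_ofReal (mul_le_mul_of_nonneg_left
          (sum_le_rpow_sum_rpow_one_div F hu hp0 hp1) hC)

lemma slobodeckij_exponent_pos_lt_one {d s p : ℝ} (hd : 0 < d) (hs0 : 0 < s) (hs1 : s ≤ 1)
    (hp0 : d / (d + s) < p) (hp1 : p < 1) : 0 < p ∧ 0 < s + d - d / p ∧ s + d - d / p < 1 := by
  have hp : 0 < p := (div_pos hd (by linarith)).trans hp0
  rw [div_lt_iff₀ (by linarith)] at hp0
  refine ⟨hp, ?_, ?_⟩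
  · rw [sub_pos, div_lt_iff₀ hp]
    linarith
  · have : d < d / p := by rw [lt_div_iff₀ hp]; nlinarith
    linarith

theorem statement9_general
    (n : ℕ) (d s p 𝒜 : ℝ) (hd0 : 0 < d)
    (hs0 : 0 < s) (hs1 : s ≤ 1) (hp0 : d / (d + s) < p) (hp1 : p < 1) (h𝒜 : 1 ≤ 𝒜) :
    ∃ C > (0:ℝ), ∀ Γ : Set (Eucl n), IsClosed Γ → Γ.Nonempty →
      AhlforsRegularWithin d 𝒜 Γ (EMetric.diam Γ) →
      ∀ F : Finset ℕ, ∀ z : ℕ → Eucl n, ∀ ϱ : ℕ → ℝ, ∀ lam : ℕ → ℝ,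
        ∀ a : ℕ → Eucl n → ℝ,
        (∀ k ∈ F, z k ∈ Γ ∧ 0 < ϱ k ∧ IsBlock Γ d (z k) (ϱ k) (a k)) →
        sloboInt d (s + d - d / p) 1 (sMeasure d Γ)
            (fun x => ∑ k ∈ F, lam k * a k x) ≤
          ENNReal.ofReal
            (C * (∑ k ∈ F, |lam k| ^ p * ϱ k ^ (d - d * p / 2 - s * p)) ^ (1 / p)) := by
  obtain ⟨hp, hθ0, hθ1⟩ := slobodeckij_exponent_pos_lt_one hd0 hs0 hs1 hp0 hp1
  obtain ⟨C, hC, hblock⟩ :=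
    sloboInt_block_le (n := n) hd0 (by positivity : 0 < 5 ^ n * 𝒜) hθ0 hθ1
  refine ⟨C, hC, fun Γ hΓ ⟨x₀, hx₀⟩ hreg F z ϱ lam a hF => ?_⟩
  have hgrowth := fun x (hx : x ∈ Γ) r (hr : 0 < r) =>
    sMeasure_ball_le_of_ahlforsRegularWithin hd0 (by linarith) hreg hx hr
  have := sigmaFinite_of_measure_ball_lt_top x₀ fun r hr =>
    (hgrowth x₀ hx₀ r hr).trans_lt ENNReal.ofReal_lt_top
  calc sloboInt d (s + d - d / p) 1 (sMeasure d Γ) (fun x => ∑ k ∈ F, lam k * a k x)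
      ≤ ∑ k ∈ F, ENNReal.ofReal |lam k| * sloboInt d (s + d - d / p) 1 (sMeasure d Γ) (a k) :=
        sloboInt_sum_le F lam a fun k hk => (hF k hk).2.2.measurable hΓ
    _ ≤ ∑ k ∈ F, ENNReal.ofReal |lam k| * ENNReal.ofReal (C * ϱ k ^ (d / 2 - (s + d - d / p))) := by
        gcongr with k hk
        obtain ⟨hzk, hϱk, hbk⟩ := hF k hk
        exact hblock _ Γ _ _ _ (ae_restrict_mem hΓ.measurableSet) hgrowth hzk hϱk hbk
    _ ≤ _ := sum_ofReal_abs_mul_rpow_le F lam ϱ (fun k hk => (hF k hk).2.1) hC.le hp hp1.le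

/-- quantitative embedding of the atomic space `Ȧ^{s,p}(Γ)` into the
Slobodeckij space `Λ^{θ,1}(Γ)`, `θ = s + d - d/p`: a finite linear combination of blocks
`∑ λ_k a_k` has `Λ^{θ,1}` seminorm at most `C (∑ |λ_k|^p ϱ_k^{d - dp/2 - sp})^{1/p}`. -/
theorem statement9
    (n : ℕ) (hn : 1 ≤ n) (d s p 𝒜 : ℝ) (hd0 : 0 < d) (hdn : d < n)
    (hs0 : 0 < s) (hs1 : s ≤ 1) (hp0 : d / (d + s) < p) (hp1 : p < 1) (h𝒜 : 1 ≤ 𝒜) :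
    ∃ C > (0:ℝ), ∀ Γ : Set (Eucl n), IsClosed Γ → Γ.Nonempty →
      AhlforsRegularWithin d 𝒜 Γ (EMetric.diam Γ) →
      ∀ F : Finset ℕ, ∀ z : ℕ → Eucl n, ∀ ϱ : ℕ → ℝ, ∀ lam : ℕ → ℝ,
        ∀ a : ℕ → Eucl n → ℝ,
        (∀ k ∈ F, z k ∈ Γ ∧ 0 < ϱ k ∧ IsBlock Γ d (z k) (ϱ k) (a k)) →
        sloboInt d (s + d - d / p) 1 (sMeasure d Γ)
            (fun x => ∑ k ∈ F, lam k * a k x) ≤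
          ENNReal.ofReal
            (C * (∑ k ∈ F, |lam k| ^ p * ϱ k ^ (d - d * p / 2 - s * p)) ^ (1 / p)) :=
  statement9_general n d s p 𝒜 hd0 hs0 hs1 hp0 hp1 h𝒜

end
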